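/- Let F : [0,∞) → ℝ be given by F(t) = Σ_{n=0}^∞ a_n t^n (absolutely convergent for all t ≥ 0) and define f(t) = Σ_{n=0}^∞ b_n t^n with b_n = (√π Γ((n+d)/2)/(Γ(d/2) Γ((n+1)/2))) a_n, assuming this series converges absolutely. Then for d ≥ 2 and all x ∈ ℝ^d: E_{ξ∼U(S^{d-1})}[f(|⟨ξ,x⟩|)] = F(‖x‖). -/

import Mathlib

open Real MeasureTheory RealInnerProductSpace

/-- The uniform (normalized surface) probability measure on the unit sphere in `ℝ^d`. -/
noncomputable def uniformSphere (d : ℕ) :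
    Measure (Metric.sphere (0 : EuclideanSpace ℝ (Fin d)) 1) :=
  ((volume : Measure (EuclideanSpace ℝ (Fin d))).toSphere Set.univ)⁻¹ •
    (volume : Measure (EuclideanSpace ℝ (Fin d))).toSphere

/-!
Integrate the Gaussian moment `exp (-‖x‖²) |⟪x, y⟫|ⁿ` over `ℝ^d` in two ways. In polar
coordinates it factors as the spherical moment `∫ |⟪ξ, y⟫|ⁿ dσ` times the radial integral
`Γ((n + d)/2) / 2`; after rotating `y / ‖y‖` to a coordinate vector it factors over the
coordinates as `‖y‖ⁿ Γ((n + 1)/2) π^((d - 1)/2)`. Comparing the two, and normalizing by the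
case `n = 0`, gives `E |⟪ξ, y⟫|ⁿ = ‖y‖ⁿ Γ((n+1)/2) Γ(d/2) / (√π Γ((n+d)/2))`, which is exactly
the reciprocal of the factor relating `b n` to `a n`. The series for `f` converges uniformly on
the sphere, so it can be integrated term by term.
-/

open Set Metric Module

lemma integral_Ioi_pow_mul_exp_neg_sq (k : ℕ) :
    ∫ r in Ioi (0 : ℝ), r ^ k * exp (-r ^ 2) = Gamma ((k + 1) / 2) / 2 := by
  have h := integral_rpow_mul_exp_neg_rpow two_pos (neg_one_lt_zero.trans_le k.cast_nonneg)
  simp only [Real.rpow_natCast, Real.rpow_two] at h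
  rw [h]
  ring

lemma integral_exp_neg_sq_mul_abs_pow (n : ℕ) :
    ∫ t : ℝ, exp (-t ^ 2) * |t| ^ n = Gamma ((n + 1) / 2) := by
  have h := integral_comp_abs (f := fun r : ℝ ↦ r ^ n * exp (-r ^ 2))
  simp only [sq_abs] at h
  simp_rw [mul_comm (exp _), h, integral_Ioi_pow_mul_exp_neg_sq]
  ring

lemma MeasureTheory.Measure.integral_volumeIoiPow (m : ℕ) (g : ℝ → ℝ) :
    ∫ r, g r ∂(volumeIoiPow m) = ∫ r in Ioi (0 : ℝ), r ^ m * g r := by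
  simp only [volumeIoiPow, ENNReal.ofReal]
  rw [integral_withDensity_eq_integral_smul
      ((measurable_subtype_coe.pow_const _).real_toNNReal),
    integral_subtype_comap measurableSet_Ioi fun r ↦ Real.toNNReal (r ^ m) • g r]
  refine setIntegral_congr_fun measurableSet_Ioi fun r hr ↦ ?_
  rw [NNReal.smul_def, Real.coe_toNNReal _ (pow_nonneg hr.out.le _), smul_eq_mul]

lemma EuclideanSpace.integral_exp_neg_norm_sq_mul_abs_apply_pow {ι : Type*} [Fintype ι]
    (i : ι) (n : ℕ) :
    ∫ z : EuclideanSpace ℝ ι, exp (-‖z‖ ^ 2) * |z i| ^ n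
      = Gamma ((n + 1) / 2) * √π ^ (Fintype.card ι - 1) := by
  classical
  have hprod (w : ι → ℝ) : exp (-‖WithLp.toLp 2 w‖ ^ 2) * |w i| ^ n
      = ∏ j, exp (-w j ^ 2) * |w j| ^ (if j = i then n else 0) := by
    rw [EuclideanSpace.norm_sq_eq, Finset.prod_mul_distrib, ← Finset.sum_neg_distrib, exp_sum]
    simp [pow_ite]
  calc ∫ z : EuclideanSpace ℝ ι, exp (-‖z‖ ^ 2) * |z i| ^ n
      = ∫ w : ι → ℝ, ∏ j, exp (-w j ^ 2) * |w j| ^ (if j = i then n else 0) := by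
        simp_rw [← hprod]
        exact ((PiLp.volume_preserving_toLp ι).integral_comp
          (MeasurableEquiv.toLp 2 (ι → ℝ)).measurableEmbedding _).symm
    _ = ∏ j, Gamma (((if j = i then n else 0 : ℕ) + 1) / 2) := by
        rw [integral_fintype_prod_volume_eq_prod
          fun j t ↦ exp (-t ^ 2) * |t| ^ (if j = i then n else 0)]
        simp_rw [integral_exp_neg_sq_mul_abs_pow]
    _ = Gamma ((n + 1) / 2) * √π ^ (Fintype.card ι - 1) := by
        rw [Fintype.prod_eq_mul_prod_compl i, if_pos rfl,
          Finset.prod_congr rfl fun j hj ↦ by rw [if_neg (by simpa using hj)],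
          Finset.prod_const, Finset.card_compl, Finset.card_singleton]
        norm_num [Gamma_one_half_eq]

lemma exists_norm_eq_one_smul_eq {E : Type*} [NormedAddCommGroup E] [NormedSpace ℝ E]
    [Nontrivial E] (y : E) :
    ∃ u : E, ‖u‖ = 1 ∧ ‖y‖ • u = y := by
  rcases eq_or_ne y 0 with rfl | hy
  · obtain ⟨u, hu⟩ := exists_norm_eq E zero_le_one
    exact ⟨u, hu, by simp⟩
  · exact ⟨‖y‖⁻¹ • y, norm_smul_inv_norm hy, smul_inv_smul₀ (norm_ne_zero_iff.2 hy) y⟩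

section Polar

variable {E : Type*} [NormedAddCommGroup E] [NormedSpace ℝ E] [FiniteDimensional ℝ E]
  [Nontrivial E] [MeasurableSpace E] [BorelSpace E] (μ : Measure E) [μ.IsAddHaarMeasure]

lemma integral_eq_integral_toSphere_prod {F : Type*} [NormedAddCommGroup F] [NormedSpace ℝ F]
    (h : E → F) :
    ∫ x, h x ∂μ = ∫ p : sphere (0 : E) 1 × Ioi (0 : ℝ), h ((p.2 : ℝ) • (p.1 : E))
      ∂(μ.toSphere.prod (Measure.volumeIoiPow (finrank ℝ E - 1))) := by
  calc ∫ x, h x ∂μ = ∫ x in {0}ᶜ, h x ∂μ := by rw [restrict_compl_singleton]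
    _ = ∫ x : ({0}ᶜ : Set E), h x ∂(μ.comap (↑)) :=
      (integral_subtype_comap (measurableSet_singleton _).compl h).symm
    _ = ∫ x : ({0}ᶜ : Set E), h (((homeomorphUnitSphereProd E x).2 : ℝ) •
          ((homeomorphUnitSphereProd E x).1 : E)) ∂(μ.comap (↑)) := by
      congr 1 with x
      have hx : ‖(x : E)‖ ≠ 0 := norm_ne_zero_iff.2 x.2
      simp [smul_smul, hx]
    _ = _ := μ.measurePreserving_homeomorphUnitSphereProd.integral_comp
      (Homeomorph.measurableEmbedding _) fun p ↦ h ((p.2 : ℝ) • (p.1 : E))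

lemma integral_exp_neg_norm_sq_mul_of_homogeneous {n : ℕ} {g : E → ℝ}
    (hg : ∀ r : ℝ, 0 < r → ∀ x, g (r • x) = r ^ n * g x) :
    ∫ x, exp (-‖x‖ ^ 2) * g x ∂μ
      = (∫ ξ, g ξ ∂μ.toSphere) * (Gamma ((n + finrank ℝ E) / 2) / 2) := by
  have hpolar (p : sphere (0 : E) 1 × Ioi (0 : ℝ)) :
      exp (-‖(p.2 : ℝ) • (p.1 : E)‖ ^ 2) * g ((p.2 : ℝ) • (p.1 : E))
        = g p.1 * (exp (-(p.2 : ℝ) ^ 2) * (p.2 : ℝ) ^ n) := by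
    rw [hg _ p.2.2, norm_smul, norm_eq_of_mem_sphere p.1, mul_one,
      Real.norm_of_nonneg p.2.2.out.le]
    ring
  have hradial : ∫ r in Ioi (0 : ℝ), r ^ (finrank ℝ E - 1) * (exp (-r ^ 2) * r ^ n)
      = ∫ r in Ioi (0 : ℝ), r ^ (n + (finrank ℝ E - 1)) * exp (-r ^ 2) := by
    congr 1 with r
    rw [pow_add]
    ring
  have hdim : 1 ≤ finrank ℝ E := finrank_pos
  rw [integral_eq_integral_toSphere_prod, integral_congr_ae (.of_forall hpolar),
    integral_prod_mul (fun ξ : sphere (0 : E) 1 ↦ g ξ)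
      (fun r : Ioi (0 : ℝ) ↦ exp (-(r : ℝ) ^ 2) * (r : ℝ) ^ n),
    Measure.integral_volumeIoiPow _ fun r ↦ exp (-r ^ 2) * r ^ n, hradial,
    integral_Ioi_pow_mul_exp_neg_sq]
  push_cast [hdim]
  ring_nf

end Polar

section InnerProductSpace

variable {E : Type*} [NormedAddCommGroup E] [InnerProductSpace ℝ E] [FiniteDimensional ℝ E]
  [MeasurableSpace E] [BorelSpace E]

lemma integral_exp_neg_norm_sq_mul_abs_inner_pow {u : E} (hu : ‖u‖ = 1) (n : ℕ) :
    ∫ x, exp (-‖x‖ ^ 2) * |⟪x, u⟫| ^ n = Gamma ((n + 1) / 2) * √π ^ (finrank ℝ E - 1) := by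
  classical
  have hon : Orthonormal ℝ ((↑) : ({u} : Set E) → E) := by
    rw [orthonormal_subtype_iff_ite]
    rintro v rfl w rfl
    simp [hu]
  obtain ⟨s, b, hus, hb⟩ := hon.exists_orthonormalBasis_extension
  let i : s := ⟨u, hus rfl⟩
  have hcoord (x : E) : ⟪x, u⟫ = b.repr x i := by
    rw [b.repr_apply_apply, hb, real_inner_comm]
  simp_rw [hcoord, ← b.repr.norm_map]
  rw [b.measurePreserving_repr.integral_comp b.repr.toHomeomorph.measurableEmbedding
      fun z ↦ exp (-‖z‖ ^ 2) * |z i| ^ n,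
    EuclideanSpace.integral_exp_neg_norm_sq_mul_abs_apply_pow, finrank_eq_card_basis b.toBasis]

variable [Nontrivial E]

lemma integral_toSphere_abs_inner_pow {u : E} (hu : ‖u‖ = 1) (n : ℕ) :
    ∫ ξ : sphere (0 : E) 1, |⟪(ξ : E), u⟫| ^ n ∂(volume : Measure E).toSphere
      = 2 * Gamma ((n + 1) / 2) * √π ^ (finrank ℝ E - 1) / Gamma ((n + finrank ℝ E) / 2) := by
  have h := integral_exp_neg_norm_sq_mul_of_homogeneous (volume : Measure E)
    (g := fun x ↦ |⟪x, u⟫| ^ n) fun r hr x ↦ by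
      rw [real_inner_smul_left, abs_mul, mul_pow, abs_of_pos hr]
  rw [integral_exp_neg_norm_sq_mul_abs_inner_pow hu] at h
  have hdim : 0 < finrank ℝ E := finrank_pos
  have hΓ : 0 < Gamma ((n + finrank ℝ E) / 2) := Gamma_pos_of_pos (by positivity)
  rw [eq_div_iff hΓ.ne']
  linarith

lemma volume_toSphere_real_univ :
    (volume : Measure E).toSphere.real univ = 2 * √π ^ finrank ℝ E / Gamma (finrank ℝ E / 2) := by
  obtain ⟨u, hu⟩ := exists_norm_eq E zero_le_one
  have h := integral_toSphere_abs_inner_pow hu 0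
  simp only [pow_zero, integral_const, smul_eq_mul, mul_one, Nat.cast_zero, zero_add,
    Gamma_one_half_eq] at h
  rw [h, mul_assoc, mul_pow_sub_one finrank_pos.ne']

end InnerProductSpace

instance (d : ℕ) [NeZero d] : IsProbabilityMeasure (uniformSphere d) :=
  have : NeZero (volume : Measure (EuclideanSpace ℝ (Fin d))).toSphere :=
    ⟨Measure.toSphere_ne_zero _⟩
  isProbabilityMeasureSMul

lemma integral_uniformSphere_abs_inner_pow (d : ℕ) [NeZero d] (y : EuclideanSpace ℝ (Fin d))
    (n : ℕ) :
    ∫ ξ, |⟪(ξ : EuclideanSpace ℝ (Fin d)), y⟫| ^ n ∂uniformSphere d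
      = ‖y‖ ^ n * (Gamma ((n + 1) / 2) * Gamma (d / 2) / (√π * Gamma ((n + d) / 2))) := by
  obtain ⟨u, hu, hy⟩ := exists_norm_eq_one_smul_eq y
  have hscale (ξ : EuclideanSpace ℝ (Fin d)) : |⟪ξ, y⟫| ^ n = ‖y‖ ^ n * |⟪ξ, u⟫| ^ n := by
    conv_lhs => rw [← hy]
    rw [real_inner_smul_right, abs_mul, abs_norm, mul_pow]
  have hd : 0 < d := Nat.pos_of_neZero d
  have hΓd : 0 < Gamma (d / 2) := Gamma_pos_of_pos (by positivity)
  have hΓnd : 0 < Gamma ((n + d) / 2) := Gamma_pos_of_pos (by positivity)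
  simp_rw [hscale]
  rw [integral_const_mul, uniformSphere, integral_smul_measure, ENNReal.toReal_inv,
    ← measureReal_def, volume_toSphere_real_univ, integral_toSphere_abs_inner_pow hu,
    finrank_euclideanSpace_fin, smul_eq_mul, ← mul_pow_sub_one (NeZero.ne d) √π]
  field_simp

lemma integral_tsum_mul_pow {X : Type*} [MeasurableSpace X] (μ : Measure X) [IsFiniteMeasure μ]
    {g : X → ℝ} (hg : AEStronglyMeasurable g μ) {R : ℝ} (hgR : ∀ᵐ x ∂μ, |g x| ≤ R)
    {c : ℕ → ℝ} (hc : Summable fun n ↦ |c n| * R ^ n) :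
    ∫ x, ∑' n, c n * g x ^ n ∂μ = ∑' n, c n * ∫ x, g x ^ n ∂μ := by
  have hbound (n : ℕ) : ∀ᵐ x ∂μ, ‖c n * g x ^ n‖ ≤ |c n| * R ^ n := by
    filter_upwards [hgR] with x hx
    rw [norm_mul, norm_pow, Real.norm_eq_abs, Real.norm_eq_abs]
    gcongr
  have hint (n : ℕ) : Integrable (fun x ↦ c n * g x ^ n) μ :=
    (integrable_const _).mono' ((hg.pow n).const_mul _) (hbound n)
  have hsum : Summable fun n ↦ ∫ x, ‖c n * g x ^ n‖ ∂μ := by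
    refine (hc.mul_right (μ.real univ)).of_nonneg_of_le
      (fun n ↦ integral_nonneg fun x ↦ norm_nonneg _) fun n ↦ ?_
    calc ∫ x, ‖c n * g x ^ n‖ ∂μ ≤ ∫ _, |c n| * R ^ n ∂μ :=
          integral_mono_ae (hint n).norm (integrable_const _) (hbound n)
      _ = |c n| * R ^ n * μ.real univ := by rw [integral_const, smul_eq_mul, mul_comm]
  rw [← integral_tsum_of_summable_integral_norm hint hsum]
  simp_rw [integral_const_mul]

theorem sliced_kernel_of_power_series_general (d : ℕ) (hd : 2 ≤ d) (a : ℕ → ℝ) (F f : ℝ → ℝ)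
    (hF : ∀ t : ℝ, F t = ∑' n : ℕ, a n * t ^ n)
    (hf : ∀ t : ℝ, f t = ∑' n : ℕ,
      (Real.sqrt π * Gamma (((n : ℝ) + d) / 2) /
        (Gamma ((d : ℝ) / 2) * Gamma (((n : ℝ) + 1) / 2))) * a n * t ^ n)
    (hb : ∀ t : ℝ, 0 ≤ t → Summable fun n : ℕ =>
      |(Real.sqrt π * Gamma (((n : ℝ) + d) / 2) /
        (Gamma ((d : ℝ) / 2) * Gamma (((n : ℝ) + 1) / 2))) * a n| * t ^ n) :
    ∀ x : EuclideanSpace ℝ (Fin d),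
      ∫ ξ : Metric.sphere (0 : EuclideanSpace ℝ (Fin d)) 1,
        f |⟪(ξ : EuclideanSpace ℝ (Fin d)), x⟫| ∂(uniformSphere d) = F ‖x‖ := by
  intro x
  have : NeZero d := ⟨by omega⟩
  have hinner (ξ : sphere (0 : EuclideanSpace ℝ (Fin d)) 1) :
      |⟪(ξ : EuclideanSpace ℝ (Fin d)), x⟫| ≤ ‖x‖ := by
    simpa [norm_eq_of_mem_sphere ξ] using abs_real_inner_le_norm (ξ : EuclideanSpace ℝ (Fin d)) x
  simp_rw [hf, hF]
  rw [integral_tsum_mul_pow (uniformSphere d) (g := fun ξ ↦ |⟪(ξ : EuclideanSpace ℝ (Fin d)), x⟫|)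
    (by fun_prop) (.of_forall fun ξ ↦ (abs_abs _).trans_le (hinner ξ)) (hb ‖x‖ (norm_nonneg x))]
  refine tsum_congr fun n ↦ ?_
  have hΓd : 0 < Gamma (d / 2) := Gamma_pos_of_pos (by positivity)
  have hΓnd : 0 < Gamma ((n + d) / 2) := Gamma_pos_of_pos (by positivity)
  rw [integral_uniformSphere_abs_inner_pow]
  field_simp

theorem sliced_kernel_of_power_series (d : ℕ) (hd : 2 ≤ d) (a : ℕ → ℝ) (F f : ℝ → ℝ)
    (hF : ∀ t : ℝ, F t = ∑' n : ℕ, a n * t ^ n)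
    (ha : ∀ t : ℝ, 0 ≤ t → Summable fun n : ℕ => |a n| * t ^ n)
    (hf : ∀ t : ℝ, f t = ∑' n : ℕ,
      (Real.sqrt π * Gamma (((n : ℝ) + d) / 2) /
        (Gamma ((d : ℝ) / 2) * Gamma (((n : ℝ) + 1) / 2))) * a n * t ^ n)
    (hb : ∀ t : ℝ, 0 ≤ t → Summable fun n : ℕ =>
      |(Real.sqrt π * Gamma (((n : ℝ) + d) / 2) /
        (Gamma ((d : ℝ) / 2) * Gamma (((n : ℝ) + 1) / 2))) * a n| * t ^ n) :
    ∀ x : EuclideanSpace ℝ (Fin d),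
      ∫ ξ : Metric.sphere (0 : EuclideanSpace ℝ (Fin d)) 1,
        f |⟪(ξ : EuclideanSpace ℝ (Fin d)), x⟫| ∂(uniformSphere d) = F ‖x‖ :=
  sliced_kernel_of_power_series_general d hd a F f hF hf hb
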